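/- arXiv:0706.3092 — 2 statements merged into one kernel-verified Lean document; each statement's English description precedes it below -/
import Mathlib

section
/- Let B be a symmetric bilinear form on an n-dimensional Euclidean vector space (V,g) and let s_k denote the k-th elementary symmetric function of the eigenvalues of the operator associated to B via g. Then s_k = (1/(k!)²) c^k(B^k), where c is the contraction map on double forms (the adjoint of exterior multiplication by the metric g). -/
open Finset

noncomputable section

abbrev E (n : ℕ) := EuclideanSpace ℝ (Fin n)

/-- `(p,q)`-double forms on `ℝⁿ` (modeled as real-valued functions of a `p`-tuple
and a `q`-tuple of vectors; genuine double forms are singled out by `DF.IsDF`). -/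
abbrev DF (n p q : ℕ) := (Fin p → E n) → (Fin q → E n) → ℝ

namespace DF

/-- the standard orthonormal basis of `ℝⁿ` -/
def e (n : ℕ) (i : Fin n) : E n := EuclideanSpace.single i 1

/-- cast a double form along equalities of bidegrees -/
def cDF {n p q p' q' : ℕ} (hp : p = p') (hq : q = q') (ω : DF n p q) : DF n p' q' :=
  fun x y => ω (fun i => x (Fin.cast hp i)) (fun j => y (Fin.cast hq j))

/-- the exterior product of double forms (extending the Kulkarni–Nomizu product) -/
def mul {n p q p' q' : ℕ} (ω : DF n p q) (θ : DF n p' q') : DF n (p + p') (q + q') :=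
  fun x y =>
    ((p.factorial * p'.factorial * q.factorial * q'.factorial : ℕ) : ℝ)⁻¹ *
      ∑ σ : Equiv.Perm (Fin (p + p')), ∑ τ : Equiv.Perm (Fin (q + q')),
        ((Equiv.Perm.sign σ : ℤ) : ℝ) * ((Equiv.Perm.sign τ : ℤ) : ℝ) *
          (ω (fun i => x (σ (Fin.castAdd p' i))) (fun j => y (τ (Fin.castAdd q' j))) *
           θ (fun i => x (σ (Fin.natAdd p i))) (fun j => y (τ (Fin.natAdd q j))))

/-- the bilinear form of the metric, as a `(1,1)`-double form -/
def gDF (n : ℕ) : DF n 1 1 := fun x y => @inner ℝ _ _ (x 0) (y 0)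

/-- a bilinear form as a `(1,1)`-double form -/
def ofBilin {n : ℕ} (B : E n →ₗ[ℝ] E n →ₗ[ℝ] ℝ) : DF n 1 1 := fun x y => B (x 0) (y 0)

/-- the `k`-th exterior power `B^k` of a `(1,1)`-double form -/
def pow1 {n : ℕ} (B : DF n 1 1) : (k : ℕ) → DF n k k
  | 0 => fun _ _ => 1
  | (k + 1) => cDF (Nat.add_comm 1 k) (Nat.add_comm 1 k) (mul B (pow1 B k))

/-- the `k`-th exterior power `R^k` of a `(2,2)`-double form -/
def pow2 {n : ℕ} (R : DF n 2 2) : (k : ℕ) → DF n (2 * k) (2 * k)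
  | 0 => fun _ _ => 1
  | (k + 1) => cDF (by omega) (by omega) (mul R (pow2 R k))

/-- the `m`-fold contraction `c^m ω` -/
def contr {n : ℕ} (m p q : ℕ) (ω : DF n (m + p) (m + q)) : DF n p q :=
  fun x y => ∑ I : Fin m → Fin n,
    ω (Fin.append (fun i => e n (I i)) x) (Fin.append (fun i => e n (I i)) y)

/-- the scalar value of a `(0,0)`-double form -/
def scal {n : ℕ} (ω : DF n 0 0) : ℝ := ω (fun i => i.elim0) (fun i => i.elim0)

/-- the natural inner product of two `(p,q)`-double forms -/
def innerDF {n p q : ℕ} (ω θ : DF n p q) : ℝ :=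
  ((p.factorial * q.factorial : ℕ) : ℝ)⁻¹ *
    ∑ I : Fin p → Fin n, ∑ J : Fin q → Fin n,
      ω (fun i => e n (I i)) (fun j => e n (J j)) *
        θ (fun i => e n (I i)) (fun j => e n (J j))

open Classical in
/-- the sign of the concatenation of two index tuples, as a permutation of `Fin n`
(zero if it is not a permutation) -/
def epsSgn {n a b : ℕ} (I : Fin a → Fin n) (K : Fin b → Fin n) : ℝ :=
  if h : a + b = n then
    if hb : Function.Bijective (fun i => Fin.append I K (Fin.cast h.symm i)) then
      ((Equiv.Perm.sign (Equiv.ofBijective _ hb) : ℤ) : ℝ)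
    else 0
  else 0

/-- the generalized Hodge star operator on double forms,
`(*ω)(·,·) = (−1)^{(p+q)(n−p−q)} ω(*·,*·)` -/
def star {n p q : ℕ} (ω : DF n p q) : DF n (n - p) (n - q) :=
  fun x y =>
    ((-1 : ℝ) ^ (((p + q : ℕ) : ℤ) * ((n : ℤ) - (p : ℤ) - (q : ℤ)))) *
      (((p.factorial * q.factorial : ℕ) : ℝ)⁻¹ *
        ∑ I : Fin (n - p) → Fin n, ∑ J : Fin (n - q) → Fin n,
          (∏ i, @inner ℝ _ _ (e n (I i)) (x i)) * (∏ j, @inner ℝ _ _ (e n (J j)) (y j)) *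
            ∑ K : Fin p → Fin n, ∑ L : Fin q → Fin n,
              epsSgn I K * epsSgn J L * ω (fun i => e n (K i)) (fun j => e n (L j)))

/-- a function of a `p`-tuple of vectors is an (alternating multilinear) `p`-form -/
def IsAlt {n p : ℕ} (f : (Fin p → E n) → ℝ) : Prop :=
  ∃ A : AlternatingMap ℝ (E n) ℝ (Fin p), ∀ x, A x = f x

/-- `ω` is a genuine double form: alternating multilinear in each block of arguments -/
def IsDF {n p q : ℕ} (ω : DF n p q) : Prop :=
  (∀ y, IsAlt fun x => ω x y) ∧ (∀ x, IsAlt fun y => ω x y)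

/-- the first Bianchi identity for a `(p+1,p+1)`-double form -/
def FirstBianchi {n p : ℕ} (ω : DF n (p + 1) (p + 1)) : Prop :=
  ∀ (x : Fin (p + 2) → E n) (y : Fin p → E n),
    ∑ i : Fin (p + 2), ((-1 : ℝ) ^ (i : ℕ)) *
      ω (fun j => x (i.succAbove j)) (Fin.cons (x i) y) = 0

/-- the `k`-th elementary symmetric function of `μ₁, …, μₙ` -/
def esymm (n k : ℕ) (μ : Fin n → ℝ) : ℝ :=
  ∑ s ∈ Finset.powersetCard k (Finset.univ : Finset (Fin n)), ∏ i ∈ s, μ i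

end DF

/-!
Expanding the exterior powers gives `B^k(x, y) = k! det [B(xᵢ, yⱼ)]`, so `B^k` is alternating
multilinear in both blocks, and its full contraction `c^k B^k = ∑_I B^k(e_I, e_I)` may be
computed in any orthonormal basis. In an eigenbasis, `[B(e_{I a}, e_{I b})]` is `diag μ`
restricted to the rows and columns `I`: its determinant vanishes unless `I` is injective, and
then equals `∏ μ_{I j}`. Each `k`-subset is the image of `k!` injective tuples, so
`c^k B^k = (k!)² s_k`.
-/

open Equiv Equiv.Perm

namespace Finset

variable {ι : Type*} [Fintype ι] [DecidableEq ι]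

theorem card_filter_injective_image_eq {k : ℕ} (s : Finset ι) (hs : #s = k) :
    #{I : Fin k → ι | Function.Injective I ∧ univ.image I = s} = k.factorial := by
  have hcard : Fintype.card s = k := by simpa using hs
  let toEquiv : {I : Fin k → ι // Function.Injective I ∧ univ.image I = s} ≃ (Fin k ≃ s) :=
    { toFun := fun I => Equiv.ofBijective
        (fun j => ⟨I.1 j, (Finset.ext_iff.1 I.2.2 _).1 (mem_image_of_mem I.1 (mem_univ j))⟩)
        ((Fintype.bijective_iff_injective_and_card _).mpr
          ⟨fun a b h => I.2.1 (congrArg Subtype.val h), by simp [hcard]⟩)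
      invFun := fun σ => ⟨fun j => σ j, Subtype.val_injective.comp σ.injective, by
        ext a
        simp only [mem_image, mem_univ, true_and]
        exact ⟨fun ⟨j, hj⟩ => hj ▸ (σ j).2, fun ha => ⟨σ.symm ⟨a, ha⟩, by simp⟩⟩⟩
      left_inv := fun I => rfl
      right_inv := fun σ => Equiv.ext fun j => rfl }
  rw [← Fintype.card_subtype, Fintype.card_congr toEquiv,
    Fintype.card_equiv (s.equivFinOfCardEq hs).symm, Fintype.card_fin]

theorem sum_ite_injective_prod_eq_factorial_mul {R : Type*} [CommSemiring R] (k : ℕ)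
    (μ : ι → R) :
    ∑ I : Fin k → ι, (if Function.Injective I then ∏ j, μ (I j) else 0) =
      k.factorial * ∑ s ∈ powersetCard k univ, ∏ i ∈ s, μ i := by
  rw [← sum_filter, mul_sum, ← sum_fiberwise_of_maps_to (g := fun I => univ.image I)
    (t := powersetCard k univ) fun I hI => ?_]
  · refine sum_congr rfl fun s hs => ?_
    rw [filter_filter, sum_congr rfl fun I hI => ?_, sum_const,
      card_filter_injective_image_eq s (mem_powersetCard.1 hs).2, nsmul_eq_mul]
    obtain ⟨hinj, rfl⟩ := (mem_filter.1 hI).2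
    exact (prod_image fun a _ b _ h => hinj h).symm
  · rw [mem_filter] at hI
    simp [mem_powersetCard, card_image_of_injective _ hI.2]

end Finset

namespace Matrix

variable {R : Type*} [CommRing R]

theorem sum_sign_mul_prod_eq_sign_mul_det {ι : Type*} [Fintype ι] [DecidableEq ι]
    (σ : Perm ι) (M : Matrix ι ι R) :
    ∑ τ : Perm ι, ((sign τ : ℤ) : R) * ∏ i, M (σ i) (τ i) = (sign σ : ℤ) * M.det := by
  rw [← det_permute, ← det_transpose, det_apply']
  rfl

theorem sum_sign_mul_det_submatrix_succ {k : ℕ} (M : Matrix (Fin (k + 1)) (Fin (k + 1)) R) :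
    ∑ σ : Perm (Fin (k + 1)), ∑ τ : Perm (Fin (k + 1)),
      ((sign σ : ℤ) : R) * ((sign τ : ℤ) : R) *
        (M (σ 0) (τ 0) * (M.submatrix (σ ∘ Fin.succ) (τ ∘ Fin.succ)).det) =
      ((k + 1).factorial * k.factorial : ℕ) * M.det := by
  have row (σ : Perm (Fin (k + 1))) :
      ∑ τ : Perm (Fin (k + 1)), ((sign τ : ℤ) : R) *
        (M (σ 0) (τ 0) * (M.submatrix (σ ∘ Fin.succ) (τ ∘ Fin.succ)).det) =
      k.factorial * ((sign σ : ℤ) * M.det) := by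
    have minor (τ : Perm (Fin (k + 1))) :
        (M.submatrix (σ ∘ Fin.succ) (τ ∘ Fin.succ)).det =
          ∑ ρ : Perm (Fin k), ((sign ρ : ℤ) : R) * ∏ i, M (σ i.succ) (τ (ρ i).succ) := by
      simpa using (sum_sign_mul_prod_eq_sign_mul_det 1
        (M.submatrix (σ ∘ Fin.succ) (τ ∘ Fin.succ))).symm
    -- `τ ↦ τ * decomposeFin.symm (0, ρ)` absorbs the permutation `ρ` of the minor, fixing `0`
    have absorb (ρ : Perm (Fin k)) :
        ∑ τ : Perm (Fin (k + 1)), ((sign τ : ℤ) : R) * ((sign ρ : ℤ) : R) *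
          (M (σ 0) (τ 0) * ∏ i, M (σ i.succ) (τ (ρ i).succ)) =
        (sign σ : ℤ) * M.det := by
      rw [← sum_sign_mul_prod_eq_sign_mul_det]
      refine Fintype.sum_equiv (Equiv.mulRight (decomposeFin.symm (0, ρ))) _ _ fun τ => ?_
      simp [Fin.prod_univ_succ, mul_assoc, mul_left_comm]
    calc _ = ∑ ρ : Perm (Fin k), ∑ τ : Perm (Fin (k + 1)),
        ((sign τ : ℤ) : R) * ((sign ρ : ℤ) : R) *
          (M (σ 0) (τ 0) * ∏ i, M (σ i.succ) (τ (ρ i).succ)) := by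
          rw [Finset.sum_comm]
          refine Finset.sum_congr rfl fun τ _ => ?_
          rw [minor, Finset.mul_sum, Finset.mul_sum]
          exact Finset.sum_congr rfl fun ρ _ => by ring
      _ = _ := by simp [absorb, Fintype.card_perm]
  have sign_mul_self (σ : Perm (Fin (k + 1))) : ((sign σ : ℤ) : R) * (sign σ : ℤ) = 1 := by
    rw [← Int.cast_mul, ← Units.val_mul, Int.units_mul_self, Units.val_one, Int.cast_one]
  calc _ = ∑ σ : Perm (Fin (k + 1)),
        ((sign σ : ℤ) : R) * (k.factorial * ((sign σ : ℤ) * M.det)) := by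
        refine Finset.sum_congr rfl fun σ _ => ?_
        rw [← row, Finset.mul_sum]
        exact Finset.sum_congr rfl fun τ _ => by ring
    _ = ∑ _σ : Perm (Fin (k + 1)), (k.factorial : R) * M.det :=
        Finset.sum_congr rfl fun σ _ => by
          linear_combination ((k.factorial : R) * M.det) * sign_mul_self σ
    _ = _ := by simp [Fintype.card_perm, mul_assoc]

theorem det_submatrix_diagonal {ι κ : Type*} [Fintype κ] [DecidableEq κ] [DecidableEq ι]
    (μ : ι → R) (I : κ → ι) :
    ((diagonal μ).submatrix I I).det = if Function.Injective I then ∏ j, μ (I j) else 0 := by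
  split_ifs with hI
  · rw [submatrix_diagonal _ _ hI, det_diagonal]
    rfl
  · obtain ⟨a, b, hab, hne⟩ := Function.not_injective_iff.mp hI
    exact det_zero_of_row_eq hne (funext fun c => by simp [hab])

end Matrix

section OrthonormalExpansion

variable {ι V M : Type*} [Fintype ι]
  [NormedAddCommGroup V] [InnerProductSpace ℝ V] [AddCommGroup M] [Module ℝ M]

theorem MultilinearMap.apply_eq_sum_orthonormalBasis {k : ℕ}
    (f : MultilinearMap ℝ (fun _ : Fin k => V) M) (b : OrthonormalBasis ι ℝ V)
    (x : Fin k → V) :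
    f x = ∑ J : Fin k → ι, (∏ j, inner ℝ (b (J j)) (x j)) • f fun j => b (J j) := by
  conv_lhs => rw [show x = fun j => ∑ c, inner ℝ (b c) (x j) • b c from
    funext fun j => (b.sum_repr' (x j)).symm]
  rw [f.map_sum]
  simp_rw [f.map_smul_univ]

theorem OrthonormalBasis.sum_prod_inner_mul_inner {k : ℕ} (b : OrthonormalBasis ι ℝ V)
    (u v : Fin k → V) :
    ∑ I : Fin k → ι, ∏ j, inner ℝ (u j) (b (I j)) * inner ℝ (v j) (b (I j)) =
      ∏ j, inner ℝ (u j) (v j) := by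
  rw [← Fintype.prod_sum fun j c => inner ℝ (u j) (b c) * inner ℝ (v j) (b c)]
  refine Finset.prod_congr rfl fun j _ => ?_
  simp_rw [real_inner_comm _ (v j)]
  exact b.sum_inner_mul_inner (u j) (v j)

end OrthonormalExpansion

namespace DF

variable {n : ℕ}

theorem pow1_succ_apply (β : DF n 1 1) (k : ℕ) (x y : Fin (k + 1) → E n) :
    pow1 β (k + 1) x y = ((k.factorial * k.factorial : ℕ) : ℝ)⁻¹ *
      ∑ σ : Perm (Fin (k + 1)), ∑ τ : Perm (Fin (k + 1)),
        ((sign σ : ℤ) : ℝ) * ((sign τ : ℤ) : ℝ) *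
          (β (fun _ => x (σ 0)) (fun _ => y (τ 0)) *
            pow1 β k (fun i => x (σ i.succ)) (fun i => y (τ i.succ))) := by
  have h : 1 + k = k + 1 := Nat.add_comm 1 k
  have castAdd_zero (i : Fin 1) : (Fin.castAdd k i : Fin (1 + k)) = 0 := Fin.ext (by simp)
  have cast_succ (i : Fin k) : Fin.cast h.symm i.succ = Fin.natAdd 1 i :=
    Fin.ext (by simp; omega)
  simp only [pow1, cDF, mul, Nat.factorial_one, one_mul, mul_one]
  congr 1
  refine Fintype.sum_equiv (permCongr (finCongr h)) _ _ fun σ => ?_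
  refine Fintype.sum_equiv (permCongr (finCongr h)) _ _ fun τ => ?_
  simp [sign_permCongr, permCongr_apply, castAdd_zero, cast_succ]

theorem pow1_apply (β : DF n 1 1) (k : ℕ) (x y : Fin k → E n) :
    pow1 β k x y = k.factorial * (Matrix.of fun i j => β (fun _ => x i) (fun _ => y j)).det := by
  induction k with
  | zero => simp [pow1]
  | succ k ih =>
    set M : Matrix (Fin (k + 1)) (Fin (k + 1)) ℝ :=
      Matrix.of fun i j => β (fun _ => x i) (fun _ => y j)
    have minor (σ τ : Perm (Fin (k + 1))) :
        (Matrix.of fun i j => β (fun _ => x (σ i.succ)) (fun _ => y (τ j.succ))) =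
          M.submatrix (σ ∘ Fin.succ) (τ ∘ Fin.succ) := rfl
    simp only [pow1_succ_apply, ih, minor]
    calc _ = ((k.factorial * k.factorial : ℕ) : ℝ)⁻¹ * k.factorial *
          ∑ σ : Perm (Fin (k + 1)), ∑ τ : Perm (Fin (k + 1)),
            ((sign σ : ℤ) : ℝ) * ((sign τ : ℤ) : ℝ) *
              (M (σ 0) (τ 0) * (M.submatrix (σ ∘ Fin.succ) (τ ∘ Fin.succ)).det) := by
          simp only [mul_assoc, Finset.mul_sum]
          exact Finset.sum_congr rfl fun σ _ => Finset.sum_congr rfl fun τ _ => by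
            simp only [M, Matrix.of_apply]
            ring
      _ = _ := by
          rw [M.sum_sign_mul_det_submatrix_succ]
          push_cast
          field_simp

theorem isDF_pow1_ofBilin (B : E n →ₗ[ℝ] E n →ₗ[ℝ] ℝ) (k : ℕ) :
    IsDF (pow1 (ofBilin B) k) := by
  constructor
  · intro y
    refine ⟨(k.factorial : ℝ) •
      Matrix.detRowAlternating.compLinearMap (LinearMap.pi fun j => B.flip (y j)), fun x => ?_⟩
    exact (pow1_apply (ofBilin B) k x y).symm
  · intro x
    refine ⟨(k.factorial : ℝ) •
      Matrix.detRowAlternating.compLinearMap (LinearMap.pi fun i => B (x i)), fun y => ?_⟩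
    show _ = pow1 _ k x y
    rw [pow1_apply, ← Matrix.det_transpose]
    rfl

theorem IsAlt.apply_eq_sum_orthonormalBasis {ι : Type*} [Fintype ι] {k : ℕ}
    {f : (Fin k → E n) → ℝ} (hf : IsAlt f) (b : OrthonormalBasis ι ℝ (E n))
    (x : Fin k → E n) :
    f x = ∑ J : Fin k → ι, (∏ j, inner ℝ (b (J j)) (x j)) * f fun j => b (J j) := by
  obtain ⟨A, hA⟩ := hf
  simpa [← hA] using A.toMultilinearMap.apply_eq_sum_orthonormalBasis b x

theorem IsDF.sum_apply_orthonormalBasis_eq {ι : Type*} [Fintype ι] {k : ℕ} {ω : DF n k k}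
    (hω : IsDF ω) (b b' : OrthonormalBasis ι ℝ (E n)) :
    ∑ I : Fin k → ι, ω (fun i => b (I i)) (fun i => b (I i)) =
      ∑ I : Fin k → ι, ω (fun i => b' (I i)) (fun i => b' (I i)) := by
  classical
  have gram (J L : Fin k → ι) :
      ∑ I : Fin k → ι,
        (∏ j, inner ℝ (b' (J j)) (b (I j))) * ∏ j, inner ℝ (b' (L j)) (b (I j)) =
        if J = L then 1 else 0 := by
    simp_rw [← Finset.prod_mul_distrib, b.sum_prod_inner_mul_inner,
      orthonormal_iff_ite.mp b'.orthonormal, Finset.prod_boole, Finset.mem_univ, true_imp_iff,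
      funext_iff]
  calc _ = ∑ I : Fin k → ι, ∑ J : Fin k → ι, ∑ L : Fin k → ι,
        (∏ j, inner ℝ (b' (J j)) (b (I j))) * (∏ j, inner ℝ (b' (L j)) (b (I j))) *
          ω (fun i => b' (J i)) (fun i => b' (L i)) := by
        refine Finset.sum_congr rfl fun I _ => ?_
        rw [(hω.1 _).apply_eq_sum_orthonormalBasis b']
        refine Finset.sum_congr rfl fun J _ => ?_
        rw [(hω.2 _).apply_eq_sum_orthonormalBasis b', Finset.mul_sum]
        exact Finset.sum_congr rfl fun L _ => by ring
    _ = ∑ J : Fin k → ι, ∑ L : Fin k → ι, (if J = L then 1 else 0) *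
          ω (fun i => b' (J i)) (fun i => b' (L i)) := by
        rw [Finset.sum_comm]
        refine Finset.sum_congr rfl fun J _ => ?_
        rw [Finset.sum_comm]
        simp_rw [← gram, Finset.sum_mul]
    _ = _ := by simp

theorem scal_contr_cDF {k : ℕ} (h₁ h₂ : k = k + 0) (ω : DF n k k) :
    scal (contr k 0 0 (cDF h₁ h₂ ω)) =
      ∑ I : Fin k → Fin n, ω (fun i => e n (I i)) (fun i => e n (I i)) := by
  refine Finset.sum_congr rfl fun I _ => ?_
  simp only [cDF]
  congr 1 <;> funext i <;> exact Fin.append_left _ _ i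

end DF

/-- `s_k = (1/(k!)²) c^k (B^k)` for a symmetric bilinear form `B` with
eigenvalues `μ` (w.r.t. an orthonormal eigenbasis `e`). -/
theorem esymm_eq_contr_pow {n k : ℕ}
    (B : E n →ₗ[ℝ] E n →ₗ[ℝ] ℝ)
    (e : OrthonormalBasis (Fin n) ℝ (E n)) (μ : Fin n → ℝ)
    (hdiag : ∀ i j, B (e i) (e j) = if i = j then μ i else 0) :
    DF.esymm n k μ =
      ((k.factorial * k.factorial : ℕ) : ℝ)⁻¹ *
        DF.scal (DF.contr k 0 0 (DF.cDF (by omega) (by omega)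
          (DF.pow1 (DF.ofBilin B) k))) := by
  have eigen (I : Fin k → Fin n) :
      DF.pow1 (DF.ofBilin B) k (fun i => e (I i)) (fun i => e (I i)) =
        k.factorial * if Function.Injective I then ∏ j, μ (I j) else 0 := by
    rw [DF.pow1_apply, ← Matrix.det_submatrix_diagonal]
    congr 2
    ext a b
    simp [DF.ofBilin, hdiag, Matrix.diagonal_apply]
  rw [DF.scal_contr_cDF]
  simp only [DF.e, ← EuclideanSpace.basisFun_apply]
  rw [(DF.isDF_pow1_ofBilin B k).sum_apply_orthonormalBasis_eq _ e]
  simp_rw [eigen, ← Finset.mul_sum, Finset.sum_ite_injective_prod_eq_factorial_mul, DF.esymm]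
  field_simp
  push_cast
  ring
end
end

section
/- Let M be an n-dimensional submanifold of constant curvature λ ≠ 0 of a Riemannian manifold, with n ≥ 2k+1. Then for any normal vector N, h_{2k+1}(N) = [(n−1)! λ^k / ((n−2k−1)! 2^k)] · c(B_N). Consequently, M is (2k)-minimal if and only if M is minimal in the usual sense. -/
open Finset

noncomputable section

/-!
In the standard basis every form in sight is the double antisymmetrisation `alt` of a simple
coefficient array, and the exterior product of two such forms is the antisymmetrisation of the
concatenated arrays. Since `R = (λ/2) g²`, the form `g^{n-2k-1} R^k B_N`
therefore has coefficient array `(λ/2)^k · δ ⊗ B_N`, with `δ` the Kronecker delta on `n - 1`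
indices. The Hodge star of a top-degree form is, up to normalisation, its full
antisymmetrisation at the identity tuple, where `δ` forces the two permutations to agree; this
leaves `(n-1)! ∑ₛ B_N(eₛ, eₛ)`.
-/

namespace DF

open Equiv

variable {n : ℕ}

section Signs

variable {α : Type*} [DecidableEq α] [Fintype α]

def sgn (σ : Perm α) : ℝ := ((Perm.sign σ : ℤ) : ℝ)

lemma sgn_mul (σ τ : Perm α) : sgn (σ * τ) = sgn σ * sgn τ := by
  simp [sgn]

lemma sgn_mul_self (σ : Perm α) : sgn σ * sgn σ = 1 := by
  rw [sgn, ← Int.cast_mul, ← Units.val_mul, Int.units_mul_self, Units.val_one, Int.cast_one]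

lemma sgn_one : sgn (1 : Perm α) = 1 := by
  simp [sgn]

end Signs

lemma sum_sum_mul_right_eq_card_nsmul {G X M : Type*} [Group G] [Fintype G] [Fintype X]
    [AddCommMonoid M] (φ : X → G) (F : G → M) :
    ∑ x, ∑ g, F (g * φ x) = Fintype.card X • ∑ g, F g := by
  rw [← Finset.card_univ, ← Finset.sum_const]
  exact Finset.sum_congr rfl fun x _ => Equiv.sum_comp (Equiv.mulRight (φ x)) F

lemma sum_sum_mul_left {G H M : Type*} [Group G] [Group H] [Fintype G] [Fintype H]
    [AddCommMonoid M] (a : G) (b : H) (F : G → H → M) :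
    ∑ g, ∑ h, F (a * g) (b * h) = ∑ g, ∑ h, F g h := by
  rw [← Equiv.sum_comp (Equiv.mulLeft a⁻¹)]
  refine Finset.sum_congr rfl fun g _ => ?_
  rw [← Equiv.sum_comp (Equiv.mulLeft b⁻¹)]
  simp

lemma sum_perm_apply {β : Type*} [Fintype β] [DecidableEq β] (z : β) (f : β → ℝ) :
    ∑ σ : Perm β, f (σ z) = ((Fintype.card β - 1).factorial : ℝ) * ∑ s, f s := by
  have hz : ∀ w, ∑ σ : Perm β, f (σ w) = ∑ σ : Perm β, f (σ z) := fun w =>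
    calc ∑ σ : Perm β, f (σ w) = ∑ σ : Perm β, f (Equiv.mulRight (swap z w) σ z) := by
          simp [Perm.mul_apply]
      _ = _ := Equiv.sum_comp (Equiv.mulRight (swap z w)) fun σ => f (σ z)
  have hcard : 0 < Fintype.card β := Fintype.card_pos_iff.mpr ⟨z⟩
  have htotal : (Fintype.card β : ℝ) * ∑ σ : Perm β, f (σ z) =
      (Fintype.card β : ℝ) * (((Fintype.card β - 1).factorial : ℝ) * ∑ s, f s) := by
    calc (Fintype.card β : ℝ) * ∑ σ : Perm β, f (σ z)
        = ∑ w, ∑ σ : Perm β, f (σ w) := by simp [hz, Finset.sum_const, Finset.card_univ]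
      _ = ∑ σ : Perm β, ∑ s, f s := by
          rw [Finset.sum_comm]; exact Finset.sum_congr rfl fun σ _ => Equiv.sum_comp σ f
      _ = _ := by
          rw [Finset.sum_const, Finset.card_univ, Fintype.card_perm, nsmul_eq_mul,
            ← Nat.mul_factorial_pred hcard.ne']
          push_cast; ring
  exact mul_left_cancel₀ (by exact_mod_cast hcard.ne') htotal

lemma perm_ext_of_ne {β : Type*} {σ τ : Perm β} (z : β) (h : ∀ w, w ≠ z → σ w = τ w) :
    σ = τ := by
  have hz : σ z = τ z := by
    by_contra hne
    have hu : σ.symm (τ z) ≠ z := fun hu => hne (by simpa using (congrArg σ hu).symm)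
    exact hu (τ.injective (by rw [← h _ hu, apply_symm_apply]))
  ext w
  by_cases hw : w = z
  · rw [hw, hz]
  · exact h w hw

abbrev Coeff (n p q : ℕ) := (Fin p → Fin n) → (Fin q → Fin n) → ℝ

def coeff {p q : ℕ} (ω : DF n p q) : Coeff n p q :=
  fun A B => ω (fun i => e n (A i)) (fun j => e n (B j))

def alt {p q : ℕ} (f : Coeff n p q) : Coeff n p q := fun A B =>
  ∑ σ : Perm (Fin p), ∑ τ : Perm (Fin q),
    sgn σ * sgn τ * f (fun i => A (σ i)) (fun j => B (τ j))

def tprod {p q p' q' : ℕ} (f : Coeff n p q) (g : Coeff n p' q') :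
    Coeff n (p + p') (q + q') := fun A B =>
  f (fun i => A (Fin.castAdd p' i)) (fun j => B (Fin.castAdd q' j)) *
    g (fun i => A (Fin.natAdd p i)) (fun j => B (Fin.natAdd q j))

def kronecker (p : ℕ) : Coeff n p p := fun A B => if A = B then 1 else 0

lemma alt_smul {p q : ℕ} (c : ℝ) (f : Coeff n p q) : alt (c • f) = c • alt f := by
  ext A B
  simp only [alt, Pi.smul_apply, smul_eq_mul, Finset.mul_sum]
  exact Finset.sum_congr rfl fun σ _ => Finset.sum_congr rfl fun τ _ => by ring

lemma alt_eq_self (f : Coeff n 1 1) : alt f = f := by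
  ext A B
  simp [alt, sgn_one]

lemma alt_apply_perm {p q : ℕ} (f : Coeff n p q) (A : Fin p → Fin n) (B : Fin q → Fin n)
    (π : Perm (Fin p)) (π' : Perm (Fin q)) :
    alt f (fun i => A (π i)) (fun j => B (π' j)) = sgn π * sgn π' * alt f A B := by
  have hsign : ∀ σ τ,
      sgn σ * sgn τ = sgn π * sgn π' * (sgn (π * σ) * sgn (π' * τ)) := by
    intro σ τ
    rw [sgn_mul, sgn_mul]
    linear_combination (-(sgn σ * sgn τ)) * sgn_mul_self π -
      sgn σ * sgn τ * sgn π * sgn π * sgn_mul_self π'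
  calc alt f (fun i => A (π i)) (fun j => B (π' j))
      = ∑ σ, ∑ τ, sgn π * sgn π' * (sgn (π * σ) * sgn (π' * τ) *
          f (fun i => A ((π * σ) i)) (fun j => B ((π' * τ) j))) := by
        unfold alt
        refine Finset.sum_congr rfl fun σ _ => Finset.sum_congr rfl fun τ _ => ?_
        rw [hsign σ τ, mul_assoc]; rfl
    _ = sgn π * sgn π' * alt f A B := by
        simp only [alt, ← Finset.mul_sum]
        exact congrArg _ (sum_sum_mul_left π π' fun σ τ =>
          sgn σ * sgn τ * f (fun i => A (σ i)) fun j => B (τ j))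

lemma alt_alt {p q : ℕ} (f : Coeff n p q) :
    alt (alt f) = ((p.factorial * q.factorial : ℕ) : ℝ) • alt f := by
  ext A B
  have hterm : ∀ (σ : Perm (Fin p)) (τ : Perm (Fin q)),
      sgn σ * sgn τ * alt f (fun i => A (σ i)) (fun j => B (τ j)) = alt f A B := by
    intro σ τ
    rw [alt_apply_perm]
    linear_combination (sgn τ * sgn τ * alt f A B) * sgn_mul_self σ +
      alt f A B * sgn_mul_self τ
  show ∑ σ, ∑ τ, sgn σ * sgn τ * alt f (fun i => A (σ i)) (fun j => B (τ j)) = _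
  simp only [hterm, Finset.sum_const, Finset.card_univ, Fintype.card_perm, Fintype.card_fin,
    nsmul_eq_mul, Pi.smul_apply, smul_eq_mul]
  push_cast; ring

lemma alt_comp_cast {p q p' q' : ℕ} (hp : p = p') (hq : q = q') (f : Coeff n p q)
    (A : Fin p' → Fin n) (B : Fin q' → Fin n) :
    alt f (fun i => A (Fin.cast hp i)) (fun j => B (Fin.cast hq j)) =
      alt (fun A B => f (fun i => A (Fin.cast hp i)) (fun j => B (Fin.cast hq j))) A B := by
  subst hp hq
  rfl

lemma coeff_smul {p q : ℕ} (c : ℝ) (ω : DF n p q) : coeff (c • ω) = c • coeff ω := rfl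

lemma coeff_cDF_of_alt {p q p' q' : ℕ} (hp : p = p') (hq : q = q') {ω : DF n p q}
    {f : Coeff n p q} (hω : coeff ω = alt f) :
    coeff (cDF hp hq ω) =
      alt (fun A B => f (fun i => A (Fin.cast hp i)) (fun j => B (Fin.cast hq j))) := by
  ext A B
  exact (congrFun (congrFun hω _) _).trans (alt_comp_cast hp hq f A B)

lemma coeff_mul {p q p' q' : ℕ} (ω : DF n p q) (θ : DF n p' q')
    (A : Fin (p + p') → Fin n) (B : Fin (q + q') → Fin n) :
    coeff (mul ω θ) A B =
      ((p.factorial * p'.factorial * q.factorial * q'.factorial : ℕ) : ℝ)⁻¹ *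
        ∑ σ : Perm (Fin (p + p')), ∑ τ : Perm (Fin (q + q')), sgn σ * sgn τ *
          (coeff ω (fun i => A (σ (Fin.castAdd p' i))) (fun j => B (τ (Fin.castAdd q' j))) *
            coeff θ (fun i => A (σ (Fin.natAdd p i))) (fun j => B (τ (Fin.natAdd q j)))) :=
  rfl

def blockPerm {a b : ℕ} (x : Perm (Fin a) × Perm (Fin b)) : Perm (Fin (a + b)) :=
  finSumFinEquiv.permCongr (x.1.sumCongr x.2)

@[simp] lemma blockPerm_castAdd {a b : ℕ} (x : Perm (Fin a) × Perm (Fin b)) (i : Fin a) :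
    blockPerm x (Fin.castAdd b i) = Fin.castAdd b (x.1 i) := by
  simp [blockPerm]

@[simp] lemma blockPerm_natAdd {a b : ℕ} (x : Perm (Fin a) × Perm (Fin b)) (i : Fin b) :
    blockPerm x (Fin.natAdd a i) = Fin.natAdd a (x.2 i) := by
  simp [blockPerm]

lemma sgn_blockPerm {a b : ℕ} (x : Perm (Fin a) × Perm (Fin b)) :
    sgn (blockPerm x) = sgn x.1 * sgn x.2 := by
  simp [sgn, blockPerm, Perm.sign_permCongr, Perm.sign_sumCongr]

lemma alt_mul_alt_eq_sum_blockPerm {p q p' q' : ℕ} (f : Coeff n p q) (g : Coeff n p' q')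
    (A : Fin (p + p') → Fin n) (B : Fin (q + q') → Fin n) :
    alt f (fun i => A (Fin.castAdd p' i)) (fun j => B (Fin.castAdd q' j)) *
        alt g (fun i => A (Fin.natAdd p i)) (fun j => B (Fin.natAdd q j)) =
      ∑ z : (Perm (Fin p) × Perm (Fin p')) × (Perm (Fin q) × Perm (Fin q')),
        sgn (blockPerm z.1) * sgn (blockPerm z.2) *
          tprod f g (fun i => A (blockPerm z.1 i)) (fun j => B (blockPerm z.2 j)) := by
  simp only [alt, tprod, Finset.sum_mul_sum, Fintype.sum_prod_type, sgn_blockPerm,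
    blockPerm_castAdd, blockPerm_natAdd]
  refine Finset.sum_congr rfl fun ρ _ => Finset.sum_congr rfl fun α _ =>
    Finset.sum_congr rfl fun ρ' _ => Finset.sum_congr rfl fun β _ => ?_
  ring

lemma coeff_mul_of_alt {p q p' q' : ℕ} {ω : DF n p q} {θ : DF n p' q'} {f : Coeff n p q}
    {g : Coeff n p' q'} (hω : coeff ω = alt f) (hθ : coeff θ = alt g) :
    coeff (mul ω θ) = alt (tprod f g) := by
  ext A B
  set G : Perm (Fin (p + p')) → Perm (Fin (q + q')) → ℝ := fun σ τ =>
    sgn σ * sgn τ * tprod f g (fun i => A (σ i)) (fun j => B (τ j))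
  have hcard : ((p.factorial * p'.factorial * q.factorial * q'.factorial : ℕ) : ℝ) =
      (Fintype.card (Perm (Fin p) × Perm (Fin p')) *
        Fintype.card (Perm (Fin q) × Perm (Fin q')) : ℕ) := by
    simp only [Fintype.card_prod, Fintype.card_perm, Fintype.card_fin]; ring_nf
  have hexpand : ∀ σ τ, sgn σ * sgn τ *
      (alt f (fun i => A (σ (Fin.castAdd p' i))) (fun j => B (τ (Fin.castAdd q' j))) *
        alt g (fun i => A (σ (Fin.natAdd p i))) (fun j => B (τ (Fin.natAdd q j)))) =
      ∑ z : (Perm (Fin p) × Perm (Fin p')) × (Perm (Fin q) × Perm (Fin q')),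
        G (σ * blockPerm z.1) (τ * blockPerm z.2) := by
    intro σ τ
    rw [alt_mul_alt_eq_sum_blockPerm (A := fun i => A (σ i)) (B := fun j => B (τ j)),
      Finset.mul_sum]
    refine Finset.sum_congr rfl fun z _ => ?_
    simp only [G, sgn_mul, Perm.mul_apply]
    ring
  rw [coeff_mul, hω, hθ]
  simp only [hexpand]
  -- Each block permutation is absorbed into `σ` or `τ`; there are `p! p'! q! q'!` of them,
  -- which cancels the normalisation of `mul`.
  have hshift := sum_sum_mul_right_eq_card_nsmul (fun z : (Perm (Fin p) × Perm (Fin p')) ×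
    (Perm (Fin q) × Perm (Fin q')) => (blockPerm z.1, blockPerm z.2)) fun στ => G στ.1 στ.2
  simp only [Prod.fst_mul, Prod.snd_mul] at hshift
  rw [← Fintype.sum_prod_type', Finset.sum_comm, hshift, Fintype.sum_prod_type',
    Fintype.card_prod, nsmul_eq_mul, ← hcard, ← mul_assoc, inv_mul_cancel₀ (by positivity),
    one_mul]
  rfl

lemma tprod_smul_left {p q p' q' : ℕ} (c : ℝ) (f : Coeff n p q) (g : Coeff n p' q') :
    tprod (c • f) g = c • tprod f g := by
  ext A B
  simp only [tprod, Pi.smul_apply, smul_eq_mul, mul_assoc]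

lemma tprod_smul_right {p q p' q' : ℕ} (c : ℝ) (f : Coeff n p q) (g : Coeff n p' q') :
    tprod f (c • g) = c • tprod f g := by
  ext A B
  simp only [tprod, Pi.smul_apply, smul_eq_mul]
  ring

lemma tprod_kronecker (a b : ℕ) :
    tprod (kronecker a) (kronecker b) = (kronecker (a + b) : Coeff n _ _) := by
  ext A B
  simp only [tprod, kronecker, funext_iff, Fin.forall_fin_add (fun i => A i = B i),
    ite_zero_mul_ite_zero, mul_one]

lemma kronecker_comp_cast {p p' : ℕ} (h : p = p') (A B : Fin p' → Fin n) :
    kronecker p (fun i => A (Fin.cast h i)) (fun i => B (Fin.cast h i)) = kronecker p' A B := by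
  subst h
  rfl

lemma tprod_assoc {p q p' q' p'' q'' : ℕ} (f : Coeff n p q) (g : Coeff n p' q')
    (h : Coeff n p'' q'') :
    tprod f (tprod g h) = fun A B => tprod (tprod f g) h
      (fun i => A (Fin.cast (Nat.add_assoc p p' p'') i))
      (fun j => B (Fin.cast (Nat.add_assoc q q' q'') j)) := by
  ext A B
  simp only [tprod, Fin.castAdd_castAdd, Fin.castAdd_natAdd, Fin.natAdd_natAdd, Fin.cast_cast,
    Fin.cast_eq_self, mul_assoc]

lemma coeff_gDF : coeff (gDF n) = alt (kronecker 1) := by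
  ext A B
  rw [alt_eq_self]
  simp [coeff, gDF, kronecker, e, funext_iff, Fin.forall_fin_one,
    EuclideanSpace.inner_single_left]

lemma coeff_pow1_gDF (p : ℕ) : coeff (pow1 (gDF n) p) = alt (kronecker p) := by
  induction p with
  | zero =>
    ext A B
    simp [coeff, pow1, alt, kronecker, sgn_one, Subsingleton.elim A B]
  | succ p ih =>
    rw [pow1, coeff_cDF_of_alt _ _ (coeff_mul_of_alt coeff_gDF ih), tprod_kronecker]
    simp only [kronecker_comp_cast]

lemma coeff_pow2_smul_pow1_gDF (c : ℝ) (k : ℕ) :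
    coeff (pow2 (c • pow1 (gDF n) 2) k) = alt (c ^ k • kronecker (2 * k)) := by
  induction k with
  | zero =>
    ext A B
    have hAB : A = B := funext fun i => absurd i.isLt (by simp)
    simp [coeff, pow2, alt, kronecker, sgn_one, hAB]
  | succ k ih =>
    have hR : coeff (c • pow1 (gDF n) 2) = alt (c • kronecker 2) := by
      rw [coeff_smul, coeff_pow1_gDF, alt_smul]
    rw [pow2, coeff_cDF_of_alt _ _ (coeff_mul_of_alt hR ih), tprod_smul_left,
      tprod_smul_right, smul_smul, tprod_kronecker]
    simp only [Pi.smul_apply, kronecker_comp_cast, pow_succ']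
    rfl

lemma alt_tprod_kronecker_apply_of_bijective {a : ℕ} (b : Coeff n 1 1)
    {A : Fin (a + 1) → Fin n} (hA : Function.Bijective A) :
    alt (tprod (kronecker a) b) A A = a.factorial * ∑ s, b (fun _ => s) (fun _ => s) := by
  have hlast : ∀ σ : Perm (Fin (a + 1)),
      (fun i : Fin 1 => A (σ (Fin.natAdd a i))) = fun _ => A (σ (Fin.last a)) :=
    fun σ => funext fun i => by rw [Subsingleton.elim i 0]; rfl
  have hdiag : ∀ σ : Perm (Fin (a + 1)),
      ∑ τ : Perm (Fin (a + 1)), sgn σ * sgn τ *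
        tprod (kronecker a) b (fun i => A (σ i)) (fun j => A (τ j)) =
      b (fun _ => A (σ (Fin.last a))) (fun _ => A (σ (Fin.last a))) := by
    intro σ
    rw [Finset.sum_eq_single σ]
    · simp [tprod, kronecker, sgn_mul_self, hlast]
    · -- `δ` forces `τ` to agree with `σ` off the last slot, hence everywhere.
      intro τ _ hτ
      suffices hne : (fun i => A (σ (Fin.castAdd 1 i))) ≠ fun i => A (τ (Fin.castAdd 1 i)) by
        simp [tprod, kronecker, hne]
      intro heq
      refine hτ (perm_ext_of_ne (Fin.last a) fun w hw => ?_).symm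
      obtain ⟨j, rfl⟩ := Fin.exists_castSucc_eq.mpr hw
      exact hA.injective (congrFun heq j)
    · simp
  unfold alt
  rw [Finset.sum_congr rfl fun σ _ => hdiag σ,
    sum_perm_apply (Fin.last a) fun t => b (fun _ => A t) (fun _ => A t), Fintype.card_fin,
    Nat.add_sub_cancel, hA.sum_comp fun s => b (fun _ => s) (fun _ => s)]

lemma alt_tprod_kronecker_tprod_kronecker_apply_of_bijective {a a' : ℕ} (b : Coeff n 1 1)
    {A : Fin (a + (a' + 1)) → Fin n} (hA : Function.Bijective A) :
    alt (tprod (kronecker a) (tprod (kronecker a') b)) A A =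
      (a + a').factorial * ∑ s, b (fun _ => s) (fun _ => s) := by
  rw [tprod_assoc, tprod_kronecker, ← alt_comp_cast]
  exact alt_tprod_kronecker_apply_of_bijective b
    (hA.comp (finCongr (Nat.add_assoc a a' 1)).bijective)

lemma epsSgn_of_eq_zero {a : ℕ} (ha : a = 0) (I : Fin a → Fin n) (K : Fin n → Fin n) :
    epsSgn I K = if hK : Function.Bijective K then sgn (Equiv.ofBijective K hK) else 0 := by
  subst ha
  have hK : (fun i => Fin.append I K (Fin.cast (Nat.zero_add n).symm i)) = K :=
    funext fun i => by
      rw [show Fin.cast (Nat.zero_add n).symm i = Fin.natAdd 0 i from Fin.ext (by simp),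
        Fin.append_right]
  rw [epsSgn, dif_pos (Nat.zero_add n)]
  simp only [hK]
  rfl

lemma sum_epsSgn_mul {a : ℕ} (ha : a = 0) (I : Fin a → Fin n) (F : (Fin n → Fin n) → ℝ) :
    ∑ K, epsSgn I K * F K = ∑ κ : Perm (Fin n), sgn κ * F κ := by
  symm
  refine Fintype.sum_of_injective (fun κ : Perm (Fin n) => ⇑κ) DFunLike.coe_injective _ _
    (fun K hK => ?_) (fun κ => ?_)
  · rw [epsSgn_of_eq_zero ha, dif_neg fun hbij => hK ⟨Equiv.ofBijective K hbij, rfl⟩, zero_mul]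
  · rw [epsSgn_of_eq_zero ha, dif_pos κ.bijective]
    congr 2
    ext
    rfl

lemma scal_cDF_star_top (ω : DF n n n) (h : n - n = 0) :
    scal (cDF h h (star ω)) =
      ((n.factorial * n.factorial : ℕ) : ℝ)⁻¹ *
        alt (coeff ω) (fun i => i) (fun j => j) := by
  have hsign : (-1 : ℝ) ^ (((n + n : ℕ) : ℤ) * ((n : ℤ) - n - n)) = 1 :=
    Even.neg_one_zpow ⟨n * (n - n - n), by push_cast; ring⟩
  have : IsEmpty (Fin (n - n)) := by rw [h]; infer_instance
  simp only [scal, cDF, star, hsign, one_mul, Finset.univ_eq_empty, Finset.prod_empty,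
    Fintype.sum_unique]
  congr 1
  simp only [mul_assoc, ← Finset.mul_sum]
  rw [sum_epsSgn_mul h]
  simp only [sum_epsSgn_mul h, Finset.mul_sum, alt, coeff, mul_assoc]

lemma scal_contr_ofBilin (B : E n →ₗ[ℝ] E n →ₗ[ℝ] ℝ) (h : 1 = 1 + 0) :
    scal (contr 1 0 0 (cDF h h (ofBilin B))) = ∑ s, B (e n s) (e n s) := by
  simp only [scal, contr, cDF, ofBilin]
  exact Fintype.sum_equiv (Equiv.funUnique (Fin 1) (Fin n)) _ _ fun I => rfl

lemma scal_cDF_star_smul_cDF {p : ℕ} (c : ℝ) (ω : DF n p p) (hp : p = n) (h : n - n = 0)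
    {f : Coeff n p p} (hω : coeff ω = alt f) :
    scal (cDF h h (star (c • cDF hp hp ω))) =
      c * alt f (fun i => Fin.cast hp i) (fun i => Fin.cast hp i) := by
  have hn : ((n.factorial * n.factorial : ℕ) : ℝ) ≠ 0 := by positivity
  rw [scal_cDF_star_top, coeff_smul, coeff_cDF_of_alt hp hp hω, ← alt_smul, alt_alt, alt_smul]
  simp only [Pi.smul_apply, smul_eq_mul]
  rw [← mul_assoc, inv_mul_cancel₀ hn, one_mul, ← alt_comp_cast]

end DF

/-- For a submanifold of constant curvature `λ ≠ 0` (so `R = (λ/2)g²`),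
`h_{2k+1}(N) = ((n−1)! λ^k / ((n−2k−1)! 2^k)) · c(B_N)`; consequently `h_{2k+1}(N) = 0`
iff `c(B_N) = 0`, i.e. `(2k)`-minimality is equivalent to ordinary minimality. -/
theorem DF.constantCurvature_higher_minimal {n k : ℕ} (hkn : 2 * k + 1 ≤ n)
    (lam : ℝ) (hlam : lam ≠ 0)
    (R : DF n 2 2) (hR : R = (lam / 2) • DF.pow1 (DF.gDF n) 2)
    (BN : E n →ₗ[ℝ] E n →ₗ[ℝ] ℝ) :
    DF.scal (DF.cDF (by omega) (by omega) (DF.star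
        (((n - 2 * k - 1).factorial : ℝ)⁻¹ •
          (DF.cDF (by omega) (by omega)
            (DF.mul (DF.pow1 (DF.gDF n) (n - 2 * k - 1))
              (DF.mul (DF.pow2 R k) (DF.ofBilin BN))) : DF n n n)))) =
      ((n - 1).factorial : ℝ) * lam ^ k / (((n - 2 * k - 1).factorial : ℝ) * 2 ^ k) *
        DF.scal (DF.contr 1 0 0
          (DF.cDF (by omega) (by omega) (DF.ofBilin BN) : DF n (1 + 0) (1 + 0))) ∧
    (DF.scal (DF.cDF (by omega) (by omega) (DF.star
        (((n - 2 * k - 1).factorial : ℝ)⁻¹ •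
          (DF.cDF (by omega) (by omega)
            (DF.mul (DF.pow1 (DF.gDF n) (n - 2 * k - 1))
              (DF.mul (DF.pow2 R k) (DF.ofBilin BN))) : DF n n n)))) = 0 ↔
      DF.scal (DF.contr 1 0 0
        (DF.cDF (by omega) (by omega) (DF.ofBilin BN) : DF n (1 + 0) (1 + 0))) = 0) := by
  have hcoeff : DF.coeff (DF.mul (DF.pow1 (DF.gDF n) (n - 2 * k - 1))
      (DF.mul (DF.pow2 R k) (DF.ofBilin BN))) = DF.alt ((lam / 2) ^ k •
        DF.tprod (DF.kronecker (n - 2 * k - 1)) (DF.tprod (DF.kronecker (2 * k))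
          (DF.coeff (DF.ofBilin BN)))) := by
    rw [hR, DF.coeff_mul_of_alt (DF.coeff_pow1_gDF _) (DF.coeff_mul_of_alt
      (DF.coeff_pow2_smul_pow1_gDF _ k) (DF.alt_eq_self _).symm), DF.tprod_smul_left,
      DF.tprod_smul_right]
  rw [DF.scal_cDF_star_smul_cDF _ _ (by omega) _ hcoeff, DF.alt_smul, Pi.smul_apply,
    Pi.smul_apply, smul_eq_mul, DF.alt_tprod_kronecker_tprod_kronecker_apply_of_bijective
      (A := fun i => Fin.cast (by omega) i) _ (finCongr (by omega)).bijective,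
    DF.scal_contr_ofBilin, show n - 2 * k - 1 + 2 * k = n - 1 by omega]
  have hC : ((n - 1).factorial : ℝ) * lam ^ k /
      (((n - 2 * k - 1).factorial : ℝ) * 2 ^ k) ≠ 0 := by
    positivity
  have hval : (((n - 2 * k - 1).factorial : ℝ))⁻¹ *
      ((lam / 2) ^ k * (((n - 1).factorial : ℝ) * ∑ s, BN (DF.e n s) (DF.e n s))) =
      ((n - 1).factorial : ℝ) * lam ^ k / (((n - 2 * k - 1).factorial : ℝ) * 2 ^ k) *
        ∑ s, BN (DF.e n s) (DF.e n s) := by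
    rw [div_pow]
    field_simp
  exact ⟨hval, hval ▸ mul_eq_zero_iff_left hC⟩
end
end
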